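/- arXiv:2511.16281 — 9 statements merged into one kernel-verified Lean document; each statement's English description precedes it below -/
import Mathlib

section
/- The denominator height H on Gaussian integers is sub-multiplicative: for all α, γ ∈ ℤ[i], H(αγ) ≤ H(α)·H(γ). -/
/-!
Write `g(z) = gcd(re z, im z)`, so that `H(z) * g(z) = N(z)`. Both `re` and `im` of `αγ` are bilinear
in the coordinates of `α` and `γ`, hence `g(α) g(γ) ∣ g(αγ)`; together with `N(αγ) = N(α) N(γ)` this
gives `H(αγ) g(αγ) = H(α) H(γ) g(α) g(γ) ≤ H(α) H(γ) g(αγ)`.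
-/

/-- The denominator height of a Gaussian integer:
`H(a+bi) = (a² + b²) / gcd(a,b)`, with `H(0) = 0`. -/
def denomHeight (α : GaussianInt) : ℤ := α.norm / (Int.gcd α.re α.im : ℤ)

namespace Zsqrtd

variable {d : ℤ}

def content (z : ℤ√d) : ℕ := Int.gcd z.re z.im

theorem content_dvd_re (z : ℤ√d) : (z.content : ℤ) ∣ z.re := Int.gcd_dvd_left _ _

theorem content_dvd_im (z : ℤ√d) : (z.content : ℤ) ∣ z.im := Int.gcd_dvd_right _ _

theorem content_dvd_norm (z : ℤ√d) : (z.content : ℤ) ∣ z.norm :=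
  dvd_sub ((content_dvd_re z).mul_right _) ((content_dvd_im z).mul_left _ |>.mul_right _)

theorem content_mul_content_dvd (z w : ℤ√d) :
    (z.content * w.content : ℤ) ∣ (z * w).content := by
  apply Int.dvd_coe_gcd
  · rw [re_mul, mul_assoc d]
    exact dvd_add (mul_dvd_mul (content_dvd_re z) (content_dvd_re w))
      ((mul_dvd_mul (content_dvd_im z) (content_dvd_im w)).mul_left d)
  · rw [im_mul]
    exact dvd_add (mul_dvd_mul (content_dvd_re z) (content_dvd_im w))
      (mul_dvd_mul (content_dvd_im z) (content_dvd_re w))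

end Zsqrtd

theorem denomHeight_mul_content (z : GaussianInt) : denomHeight z * z.content = z.norm :=
  Int.ediv_mul_cancel (Zsqrtd.content_dvd_norm z)

theorem denomHeight_nonneg (z : GaussianInt) : 0 ≤ denomHeight z :=
  Int.ediv_nonneg (GaussianInt.norm_nonneg z) (Int.natCast_nonneg _)

/-- The denominator height is sub-multiplicative on `ℤ[i]`. -/
theorem stmt_1 (α γ : GaussianInt) :
    denomHeight (α * γ) ≤ denomHeight α * denomHeight γ := by
  have hHH := mul_nonneg (denomHeight_nonneg α) (denomHeight_nonneg γ)
  rcases (Int.natCast_nonneg (α * γ).content).eq_or_lt with h0 | hpos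
  · change (α * γ).norm / ((α * γ).content : ℤ) ≤ _
    rwa [← h0, Int.ediv_zero]
  have hle : (α.content * γ.content : ℤ) ≤ (α * γ).content :=
    Int.le_of_dvd hpos (Zsqrtd.content_mul_content_dvd α γ)
  refine le_of_mul_le_mul_right ?_ hpos
  calc denomHeight (α * γ) * (α * γ).content
      = denomHeight α * α.content * (denomHeight γ * γ.content) := by
        rw [denomHeight_mul_content, Zsqrtd.norm_mul, denomHeight_mul_content,
          denomHeight_mul_content]
    _ = denomHeight α * denomHeight γ * (α.content * γ.content) := by ring
    _ ≤ denomHeight α * denomHeight γ * (α * γ).content := mul_le_mul_of_nonneg_left hle hHH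
end

section
/- Let E ⊂ ℝ^d be a compact set satisfying 𝒩_δ(E) ≤ C'·δ^{−s} for all 0 < δ < 1 (where 𝒩 is the covering number by closed balls of radius δ). Then there is a constant C such that for every N ∈ ℕ, the number of rational points p/q ∈ E with p ∈ ℤ^d and 1 ≤ q ≤ N is at most C·N^{min{2s, s+1}}. -/
open Metric Set

/-!
Two distinct points `p/q`, `p'/q'` with `q, q' ≤ N` are at distance at least `N⁻²`, since some
coordinate difference is a nonzero integer divided by `q q'`. Cover `E` by `C'δ^{-s}` balls of
radius `δ`. For `δ = (3N²)⁻¹` each ball contains at most one such point, which gives `N^{2s}`.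
For `δ = (2N)⁻¹` a ball spans an interval of length at most `1/q` in each coordinate, so it meets
the lattice `q⁻¹ℤ^d` in at most `2^d` points and contains at most `2^d N` rational points, which
gives `N^s ⋅ N`.
-/

def rationalPoints {d : ℕ} (N : ℕ) : Set (EuclideanSpace ℝ (Fin d)) :=
  {x | ∃ p : Fin d → ℤ, ∃ q : ℕ, 1 ≤ q ∧ q ≤ N ∧ ∀ i, x i = (p i : ℝ) / (q : ℝ)}

def scaledLattice {d : ℕ} (q : ℕ) : Set (EuclideanSpace ℝ (Fin d)) :=
  {x | ∃ p : Fin d → ℤ, ∀ i, x i = (p i : ℝ) / (q : ℝ)}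

theorem Set.ncard_le_card_mul_of_subset_biUnion {α ι : Type*} {S : Set α} {t : Finset ι}
    {B : ι → Set α} {m : ℕ} (hS : S ⊆ ⋃ i ∈ t, B i) (hB : ∀ i ∈ t, (S ∩ B i).ncard ≤ m) :
    S.ncard ≤ t.card * m :=
  calc S.ncard = (⋃ i ∈ t, S ∩ B i).ncard := by rw [← inter_iUnion₂, inter_eq_left.mpr hS]
    _ ≤ ∑ i ∈ t, (S ∩ B i).ncard := t.set_ncard_biUnion_le _
    _ ≤ ∑ _i ∈ t, m := Finset.sum_le_sum hB
    _ = t.card * m := by rw [Finset.sum_const, smul_eq_mul]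

theorem Set.ncard_inter_closedBall_le_one_of_separated {α : Type*} [MetricSpace α] {S : Set α}
    {ε δ : ℝ} (hS : ∀ x ∈ S, ∀ z ∈ S, x ≠ z → ε ≤ dist x z) (hδ : 2 * δ < ε) (y : α) :
    (S ∩ closedBall y δ).ncard ≤ 1 := by
  have hsub : (S ∩ closedBall y δ).Subsingleton := by
    intro x hx z hz
    by_contra hne
    have htri := dist_triangle_right x z y
    linarith [hS x hx.1 z hz.1 hne, mem_closedBall.mp hx.2, mem_closedBall.mp hz.2]
  exact (ncard_le_one_iff hsub.finite).mpr fun hx hz => hsub hx hz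

theorem inv_mul_le_abs_div_sub_div {p p' : ℤ} {q q' : ℕ} (hq : 0 < q) (hq' : 0 < q')
    (hne : (p : ℝ) / q ≠ p' / q') :
    ((q : ℝ) * q')⁻¹ ≤ |(p : ℝ) / q - p' / q'| := by
  have hq : (0 : ℝ) < q := by exact_mod_cast hq
  have hq' : (0 : ℝ) < q' := by exact_mod_cast hq'
  have hn : p * q' - q * p' ≠ 0 := by
    contrapose! hne
    rw [div_eq_div_iff hq.ne' hq'.ne']
    exact_mod_cast (by linarith : p * q' = p' * q)
  rw [div_sub_div _ _ hq.ne' hq'.ne', abs_div, abs_of_pos (mul_pos hq hq'), inv_eq_one_div]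
  gcongr
  exact_mod_cast Int.one_le_abs hn

theorem inv_sq_le_dist_of_mem_rationalPoints {d N : ℕ} {x z : EuclideanSpace ℝ (Fin d)}
    (hx : x ∈ rationalPoints N) (hz : z ∈ rationalPoints N) (hne : x ≠ z) :
    ((N : ℝ) ^ 2)⁻¹ ≤ dist x z := by
  obtain ⟨p, q, hq, hqN, hxp⟩ := hx
  obtain ⟨p', q', hq', hqN', hzp⟩ := hz
  obtain ⟨i, hi⟩ : ∃ i, x i ≠ z i := by
    by_contra! h
    exact hne (PiLp.ext h)
  have hqq' : (q : ℝ) * q' ≤ (N : ℝ) ^ 2 := by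
    rw [sq]; gcongr
  calc ((N : ℝ) ^ 2)⁻¹ ≤ ((q : ℝ) * q')⁻¹ := by gcongr
    _ ≤ |x i - z i| := by
      rw [hxp i, hzp i]
      exact inv_mul_le_abs_div_sub_div hq hq' (hxp i ▸ hzp i ▸ hi)
    _ ≤ dist x z := by simpa [← Real.dist_eq] using PiLp.dist_apply_le x z i

theorem Int.card_Icc_ceil_floor_le_two {a b : ℝ} (h : b ≤ a + 1) :
    (Finset.Icc ⌈a⌉ ⌊b⌋).card ≤ 2 := by
  have hfloor : ⌊b⌋ ≤ ⌊a⌋ + 1 := by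
    rw [← Int.floor_add_one]
    exact Int.floor_le_floor h
  have := Int.floor_le_ceil a
  rw [Int.card_Icc]
  omega

theorem ncard_inter_scaledLattice_le {d q : ℕ} {A : Set (EuclideanSpace ℝ (Fin d))}
    {y : EuclideanSpace ℝ (Fin d)} {δ : ℝ} (hA : A ⊆ closedBall y δ) (hq : 0 < q)
    (hδ : 2 * q * δ ≤ 1) :
    (A ∩ scaledLattice q).ncard ≤ 2 ^ d := by
  have hq : (0 : ℝ) < q := by exact_mod_cast hq
  set P := Fintype.piFinset fun i => Finset.Icc ⌈q * (y i - δ)⌉ ⌊q * (y i + δ)⌋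
  have hsub : A ∩ scaledLattice q ⊆
      P.image fun p => WithLp.toLp 2 fun i => (p i : ℝ) / q := by
    rintro x ⟨hxA, p, hxp⟩
    refine Finset.mem_image.mpr
      ⟨p, Fintype.mem_piFinset.mpr fun i => ?_, PiLp.ext fun i => (hxp i).symm⟩
    have hpi : (p i : ℝ) = q * x i := by rw [hxp i]; field_simp
    have hxi := abs_sub_le_iff.mp ((PiLp.dist_apply_le x y i).trans (mem_closedBall.mp (hA hxA)))
    rw [Finset.mem_Icc, Int.ceil_le, Int.le_floor, hpi]
    constructor <;> gcongr <;> linarith [hxi.1, hxi.2]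
  calc (A ∩ scaledLattice q).ncard ≤ (P.image _).card :=
        (ncard_le_ncard hsub (Finset.finite_toSet _)).trans (ncard_coe_finset _).le
    _ ≤ P.card := Finset.card_image_le
    _ ≤ ∏ _i : Fin d, 2 := by
      rw [Fintype.card_piFinset]
      gcongr
      exact Int.card_Icc_ceil_floor_le_two (by nlinarith)
    _ = 2 ^ d := by simp

theorem ncard_inter_closedBall_le_of_subset_rationalPoints {d N : ℕ}
    {A : Set (EuclideanSpace ℝ (Fin d))} (hA : A ⊆ rationalPoints N)
    (y : EuclideanSpace ℝ (Fin d)) {δ : ℝ} (hδ₀ : 0 ≤ δ) (hδ : 2 * N * δ ≤ 1) :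
    (A ∩ closedBall y δ).ncard ≤ N * 2 ^ d := by
  have hcover : A ∩ closedBall y δ ⊆ ⋃ q ∈ Finset.Icc 1 N, scaledLattice q := by
    rintro x ⟨hxA, -⟩
    obtain ⟨p, q, hq, hqN, hxp⟩ := hA hxA
    exact mem_biUnion (Finset.mem_Icc.mpr ⟨hq, hqN⟩) ⟨p, hxp⟩
  simpa using ncard_le_card_mul_of_subset_biUnion hcover fun q hq => by
    obtain ⟨hq, hqN⟩ := Finset.mem_Icc.mp hq
    refine ncard_inter_scaledLattice_le inter_subset_right hq (le_trans ?_ hδ)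
    gcongr

def CoveringNumberBound {α : Type*} [PseudoMetricSpace α] (E : Set α) (s C' : ℝ) : Prop :=
  ∀ δ : ℝ, 0 < δ → δ < 1 →
    ∃ t : Finset α, (t.card : ℝ) ≤ C' * δ ^ (-s) ∧ E ⊆ ⋃ y ∈ t, closedBall y δ

section Covering

variable {d : ℕ} {E : Set (EuclideanSpace ℝ (Fin d))} {s C' : ℝ}

theorem ncard_inter_rationalPoints_le_mul_rpow_two_mul
    (hcov : CoveringNumberBound E s C') {N : ℕ} (hN : 0 < N) :
    ((E ∩ rationalPoints N).ncard : ℝ) ≤ C' * 3 ^ s * (N : ℝ) ^ (2 * s) := by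
  have hN : (1 : ℝ) ≤ N := by exact_mod_cast hN
  set δ : ℝ := (3 * (N : ℝ) ^ 2)⁻¹
  obtain ⟨t, ht, hE⟩ := hcov δ (by positivity) (inv_lt_one_of_one_lt₀ (by nlinarith))
  have hsep : 2 * δ < ((N : ℝ) ^ 2)⁻¹ := by
    simp only [δ, mul_inv]
    linarith [inv_pos.mpr (by positivity : (0 : ℝ) < N ^ 2)]
  have hcount : (E ∩ rationalPoints N).ncard ≤ t.card := by
    simpa using ncard_le_card_mul_of_subset_biUnion (m := 1) (fun x hx => hE hx.1) fun y _ =>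
      ncard_inter_closedBall_le_one_of_separated
        (fun x hx z hz => inv_sq_le_dist_of_mem_rationalPoints hx.2 hz.2) hsep y
  have hδ : δ ^ (-s) = 3 ^ s * (N : ℝ) ^ (2 * s) := by
    rw [Real.inv_rpow (by positivity), Real.rpow_neg (by positivity), inv_inv,
      Real.mul_rpow (by norm_num) (by positivity), ← Real.rpow_natCast_mul (by positivity)]
    norm_cast
  calc ((E ∩ rationalPoints N).ncard : ℝ) ≤ t.card := by exact_mod_cast hcount
    _ ≤ C' * δ ^ (-s) := ht
    _ = C' * 3 ^ s * (N : ℝ) ^ (2 * s) := by rw [hδ, mul_assoc]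

theorem ncard_inter_rationalPoints_le_mul_rpow_add_one
    (hcov : CoveringNumberBound E s C') {N : ℕ} (hN : 0 < N) :
    ((E ∩ rationalPoints N).ncard : ℝ) ≤ C' * 2 ^ s * 2 ^ d * (N : ℝ) ^ (s + 1) := by
  have hN : (1 : ℝ) ≤ N := by exact_mod_cast hN
  set δ : ℝ := (2 * (N : ℝ))⁻¹
  obtain ⟨t, ht, hE⟩ := hcov δ (by positivity) (inv_lt_one_of_one_lt₀ (by linarith))
  have hcount : (E ∩ rationalPoints N).ncard ≤ t.card * (N * 2 ^ d) :=
    ncard_le_card_mul_of_subset_biUnion (fun x hx => hE hx.1) fun y _ =>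
      ncard_inter_closedBall_le_of_subset_rationalPoints inter_subset_right y (by positivity)
        (mul_inv_cancel₀ (by positivity)).le
  have hδ : δ ^ (-s) = 2 ^ s * (N : ℝ) ^ s := by
    rw [Real.inv_rpow (by positivity), Real.rpow_neg (by positivity), inv_inv,
      Real.mul_rpow (by norm_num) (by positivity)]
  calc ((E ∩ rationalPoints N).ncard : ℝ) ≤ t.card * (N * 2 ^ d) := by exact_mod_cast hcount
    _ ≤ C' * δ ^ (-s) * (N * 2 ^ d) := by gcongr
    _ = C' * 2 ^ s * 2 ^ d * (N : ℝ) ^ (s + 1) := by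
      rw [hδ, Real.rpow_add_one (by positivity)]; ring

end Covering

theorem stmt_5_general {d : ℕ} (E : Set (EuclideanSpace ℝ (Fin d)))
    (s C' : ℝ) (hC' : 0 < C')
    (hcov : ∀ δ : ℝ, 0 < δ → δ < 1 → ∃ t : Finset (EuclideanSpace ℝ (Fin d)),
      (t.card : ℝ) ≤ C' * δ ^ (-s) ∧ E ⊆ ⋃ y ∈ t, closedBall y δ) :
    ∃ C : ℝ, 0 < C ∧ ∀ N : ℕ, 0 < N →
      (Set.ncard {x : EuclideanSpace ℝ (Fin d) |
          x ∈ E ∧ ∃ p : Fin d → ℤ, ∃ q : ℕ, 1 ≤ q ∧ q ≤ N ∧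
            ∀ i, x i = (p i : ℝ) / (q : ℝ)} : ℝ) ≤
        C * (N : ℝ) ^ (min (2 * s) (s + 1)) := by
  refine ⟨C' * 3 ^ s + C' * 2 ^ s * 2 ^ d, by positivity, fun N hN => ?_⟩
  change ((E ∩ rationalPoints N).ncard : ℝ) ≤ _
  rcases min_choice (2 * s) (s + 1) with h | h <;> rw [h]
  · calc _ ≤ C' * 3 ^ s * (N : ℝ) ^ (2 * s) :=
          ncard_inter_rationalPoints_le_mul_rpow_two_mul hcov hN
      _ ≤ _ := by gcongr; exact le_add_of_nonneg_right (by positivity)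
  · calc _ ≤ C' * 2 ^ s * 2 ^ d * (N : ℝ) ^ (s + 1) :=
          ncard_inter_rationalPoints_le_mul_rpow_add_one hcov hN
      _ ≤ _ := by gcongr; exact le_add_of_nonneg_left (by positivity)

/-- Let `E ⊆ ℝ^d` be compact with covering numbers `𝒩_δ(E) ≤ C'·δ^{−s}` for all
`0 < δ < 1`. Then there is `C > 0` such that for every `N ∈ ℕ`, the number of rational
points `p/q ∈ E` with `p ∈ ℤ^d` and `1 ≤ q ≤ N` is at most `C·N^{min{2s, s+1}}`. -/
theorem stmt_5 {d : ℕ} (E : Set (EuclideanSpace ℝ (Fin d))) (hE : IsCompact E)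
    (s C' : ℝ) (hs : 0 < s) (hC' : 0 < C')
    (hcov : ∀ δ : ℝ, 0 < δ → δ < 1 → ∃ t : Finset (EuclideanSpace ℝ (Fin d)),
      (t.card : ℝ) ≤ C' * δ ^ (-s) ∧ E ⊆ ⋃ y ∈ t, closedBall y δ) :
    ∃ C : ℝ, 0 < C ∧ ∀ N : ℕ, 0 < N →
      (Set.ncard {x : EuclideanSpace ℝ (Fin d) |
          x ∈ E ∧ ∃ p : Fin d → ℤ, ∃ q : ℕ, 1 ≤ q ∧ q ≤ N ∧
            ∀ i, x i = (p i : ℝ) / (q : ℝ)} : ℝ) ≤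
        C * (N : ℝ) ^ (min (2 * s) (s + 1)) :=
  stmt_5_general E s C' hC' hcov
end

section
/- Let β ∈ ℤ[i]\ℤ with |β| > 1 and let D ⊂ ℚ(i) be finite with at least two elements such that the self-similar set K = {∑_{j≥1} d_j/β^j : d_j ∈ D} is not a singleton. Then K is not contained in any (real) line in ℂ. -/
/-!
`K` is invariant under every map `x ↦ (d + x) / β` of the IFS. If `K` lay on a real line `ℓ`,
then for two distinct points `z ≠ w` of `K` both `z - w` and `((d + z) - (d + w)) / β = (z - w) / β`
would be nonzero real multiples of the direction of `ℓ`, so their quotient `β` would be real.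
-/

def realLine (a b : ℂ) : Set ℂ := {w | ∃ t : ℝ, w = a + t * b}

def digitSet (β : ℂ) (D : Set ℂ) : Set ℂ :=
  {z | ∃ f : ℕ → ℂ, (∀ j, f j ∈ D) ∧ z = ∑' j, f j / β ^ (j + 1)}

lemma summable_div_pow_succ {β : ℂ} (hβ : 1 < ‖β‖) {f : ℕ → ℂ} {C : ℝ}
    (hf : ∀ j, ‖f j‖ ≤ C) : Summable fun j => f j / β ^ (j + 1) := by
  have hr0 : 0 ≤ ‖β‖⁻¹ := inv_nonneg.mpr (norm_nonneg β)
  have hr1 : ‖β‖⁻¹ < 1 := inv_lt_one_of_one_lt₀ hβ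
  refine .of_norm_bounded ((summable_geometric_of_lt_one hr0 hr1).mul_left (C * ‖β‖⁻¹))
    fun j => ?_
  calc ‖f j / β ^ (j + 1)‖ = ‖f j‖ * ‖β‖⁻¹ ^ (j + 1) := by
        rw [norm_div, norm_pow, div_eq_mul_inv, inv_pow]
    _ ≤ C * ‖β‖⁻¹ ^ (j + 1) := by gcongr; exact hf j
    _ = C * ‖β‖⁻¹ * ‖β‖⁻¹ ^ j := by ring

lemma digitSet_nonempty (β : ℂ) {D : Set ℂ} (hD : D.Nonempty) : (digitSet β D).Nonempty :=
  let ⟨d, hd⟩ := hD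
  ⟨_, fun _ => d, fun _ => hd, rfl⟩

lemma div_add_mem_digitSet {β : ℂ} (hβ : 1 < ‖β‖) {D : Set ℂ} (hD : Bornology.IsBounded D)
    {d z : ℂ} (hd : d ∈ D) (hz : z ∈ digitSet β D) : (d + z) / β ∈ digitSet β D := by
  obtain ⟨f, hf, rfl⟩ := hz
  obtain ⟨C, hC⟩ := hD.exists_norm_le
  let g : ℕ → ℂ := fun j => Nat.casesOn j d f
  have hg : ∀ j, g j ∈ D := by rintro (_ | j) <;> simp [g, hd, hf]
  refine ⟨g, hg, ?_⟩
  have hβ0 : β ≠ 0 := norm_pos_iff.mp (one_pos.trans hβ)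
  rw [(summable_div_pow_succ hβ fun j => hC _ (hg j)).tsum_eq_zero_add]
  have htail : ∀ j, f j / β ^ (j + 1 + 1) = f j / β ^ (j + 1) * β⁻¹ := fun j => by
    rw [pow_succ _ (j + 1), div_mul_eq_div_div, div_eq_mul_inv _ β]
  simp only [g, Nat.rec_zero, htail, tsum_mul_right]
  field_simp
  ring

lemma im_eq_zero_of_real_multiples {β b u : ℂ} (hu : u ≠ 0) {t s : ℝ}
    (ht : u = t * b) (hs : u / β = s * b) : β.im = 0 := by
  rcases eq_or_ne β 0 with rfl | hβ
  · rfl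
  have hb : b ≠ 0 := by rintro rfl; simp_all
  have hs0 : (s : ℂ) ≠ 0 := by rintro h; simp_all
  have hts : (t : ℂ) = s * β :=
    mul_right_cancel₀ hb <| by rw [← ht, ← div_mul_cancel₀ u hβ, hs]; ring
  have hβs : β = t / s := by rw [eq_div_iff hs0]; linear_combination -hts
  rw [hβs, ← Complex.ofReal_div, Complex.ofReal_im]

lemma im_eq_zero_of_mem_realLine {a b d β z w : ℂ} (hzw : z ≠ w)
    (hz : z ∈ realLine a b) (hw : w ∈ realLine a b)
    (hz' : (d + z) / β ∈ realLine a b) (hw' : (d + w) / β ∈ realLine a b) : β.im = 0 := by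
  obtain ⟨t₁, ht₁⟩ := hz
  obtain ⟨t₂, ht₂⟩ := hw
  obtain ⟨s₁, hs₁⟩ := hz'
  obtain ⟨s₂, hs₂⟩ := hw'
  refine im_eq_zero_of_real_multiples (b := b) (t := t₁ - t₂) (s := s₁ - s₂)
    (sub_ne_zero.mpr hzw) ?_ ?_
  · rw [ht₁, ht₂]; push_cast; ring
  · rw [← add_sub_add_left_eq_sub z w d, sub_div, hs₁, hs₂]; push_cast; ring

theorem stmt_6_general (β : GaussianInt) (hβZ : β.im ≠ 0)
    (hβ : 1 < ‖GaussianInt.toComplex β‖)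
    (D : Finset ℂ)
    (hDcard : 2 ≤ D.card)
    (K : Set ℂ)
    (hK : K = {z : ℂ | ∃ f : ℕ → ℂ, (∀ j, f j ∈ D) ∧
      z = ∑' j : ℕ, f j / (GaussianInt.toComplex β) ^ (j + 1)})
    (hKsing : ¬ ∃ z : ℂ, K = {z}) :
    ¬ ∃ a b : ℂ, b ≠ 0 ∧ K ⊆ {w : ℂ | ∃ t : ℝ, w = a + (t : ℂ) * b} := by
  rintro ⟨a, b, -, hsub⟩
  change K = digitSet _ D at hK
  obtain ⟨d, hd⟩ : D.Nonempty := Finset.card_pos.mp (by omega)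
  obtain ⟨z, hz, w, hw, hzw⟩ : K.Nontrivial :=
    ((hK ▸ digitSet_nonempty _ ⟨d, hd⟩).exists_eq_singleton_or_nontrivial).resolve_left hKsing
  have hshift {x : ℂ} (hx : x ∈ K) : (d + x) / GaussianInt.toComplex β ∈ K :=
    hK ▸ div_add_mem_digitSet hβ D.finite_toSet.isBounded hd (hK ▸ hx)
  have him := im_eq_zero_of_mem_realLine hzw (hsub hz) (hsub hw) (hsub (hshift hz))
    (hsub (hshift hw))
  exact hβZ (by exact_mod_cast (GaussianInt.intCast_im β).trans him)

/-- Let `β ∈ ℤ[i] \ ℤ` with `|β| > 1`, and let `D ⊆ ℚ(i)` be finite with at least two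
elements such that `K = {∑_{j≥1} d_j/β^j : d_j ∈ D}` is not a singleton. Then `K` is not
contained in any real line in `ℂ`. -/
theorem stmt_6 (β : GaussianInt) (hβZ : β.im ≠ 0)
    (hβ : 1 < ‖GaussianInt.toComplex β‖)
    (D : Finset ℂ)
    (hD : ∀ t ∈ D, ∃ ω γ : GaussianInt, γ ≠ 0 ∧
      t = GaussianInt.toComplex ω / GaussianInt.toComplex γ)
    (hDcard : 2 ≤ D.card)
    (K : Set ℂ)
    (hK : K = {z : ℂ | ∃ f : ℕ → ℂ, (∀ j, f j ∈ D) ∧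
      z = ∑' j : ℕ, f j / (GaussianInt.toComplex β) ^ (j + 1)})
    (hKsing : ¬ ∃ z : ℂ, K = {z}) :
    ¬ ∃ a b : ℂ, b ≠ 0 ∧ K ⊆ {w : ℂ | ∃ t : ℝ, w = a + (t : ℂ) * b} :=
  stmt_6_general β hβZ hβ D hDcard K hK hKsing
end

section
/- Let α ∈ ℤ[i] and γ ∈ ℤ ∪ iℤ be Gaussian integers. Then gcd(α, γ) = 1 in ℤ[i] if and only if gcd(N(α), N(γ)) = 1 in ℤ. -/
namespace Zsqrtd

variable {d : ℤ}

theorem isCoprime_intCast_iff {m n : ℤ} : IsCoprime (m : ℤ√d) n ↔ IsCoprime m n := by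
  refine ⟨fun ⟨u, v, h⟩ => ⟨u.re, v.re, ?_⟩, fun h => h.intCast⟩
  simpa using congrArg re h

theorem star_eq_self_or_neg {z : ℤ√d} (hz : z.im = 0 ∨ z.re = 0) :
    star z = z ∨ star z = -z := by
  rcases hz with hz | hz
  · exact Or.inl (by ext <;> simp [hz])
  · exact Or.inr (by ext <;> simp [hz])

/-- Conjugation preserves coprimality and fixes `γ` up to sign, so `α` and `star α` are both
coprime to `γ` and to `star γ`; conversely `α ∣ norm α` and `γ ∣ norm γ`. -/
theorem isCoprime_iff_isCoprime_norm {α γ : ℤ√d} (hγ : star γ = γ ∨ star γ = -γ) :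
    IsCoprime α γ ↔ IsCoprime α.norm γ.norm := by
  rw [← isCoprime_intCast_iff (d := d), norm_eq_mul_conj, norm_eq_mul_conj]
  refine ⟨fun h => ?_, fun h => h.of_mul_left_left.of_mul_right_left⟩
  have h_star : IsCoprime (star α) (star γ) := h.map (starRingEnd (ℤ√d))
  have h_star_left : IsCoprime (star α) γ := by
    rcases hγ with hγ | hγ <;> simpa [hγ, IsCoprime.neg_right_iff] using h_star
  have h_star_right : IsCoprime α (star γ) := by
    rcases hγ with hγ | hγ <;> simpa [hγ, IsCoprime.neg_right_iff] using h
  exact (h.mul_left h_star_left).mul_right (h_star_right.mul_left h_star)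

end Zsqrtd

/-- Let `α ∈ ℤ[i]` and `γ ∈ ℤ ∪ iℤ`. Then `α` and `γ` are coprime in `ℤ[i]` if and only
if their norms are coprime in `ℤ`. -/
theorem stmt_8 (α γ : GaussianInt) (hγ : γ.im = 0 ∨ γ.re = 0) :
    IsCoprime α γ ↔ Int.gcd (Zsqrtd.norm α) (Zsqrtd.norm γ) = 1 := by
  rw [← Int.isCoprime_iff_gcd_eq_one]
  exact Zsqrtd.isCoprime_iff_isCoprime_norm (Zsqrtd.star_eq_self_or_neg hγ)
end

section
/- Let γ = 1+i (or any associate of 1+i). Then for every n ∈ ℕ, H(γⁿ) = 2^{n − ⌊n/2⌋}; in particular H(γⁿ) ≤ 2·2^{n/2}. -/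
/-!
Multiplying by a unit of `ℤ[i]` preserves the norm and, since the coordinates of `αu` are
integer combinations of those of `α` and conversely, also the gcd of the coordinates; so
`H(γⁿ) = H((1+i)ⁿ)`. As `(1+i)² = 2i`, `(1+i)^(2k)` is `2^k` times a unit and `(1+i)^(2k+1)` is
`2^k(1+i)` times a unit, of heights `2^k` and `2^(k+1)`.
-/

namespace Zsqrtd

variable {d : ℤ}

theorem gcd_re_im_dvd_gcd_re_im_mul (α β : ℤ√d) :
    Int.gcd α.re α.im ∣ Int.gcd (α * β).re (α * β).im := by
  have hre : (Int.gcd α.re α.im : ℤ) ∣ α.re := Int.gcd_dvd_left _ _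
  have him : (Int.gcd α.re α.im : ℤ) ∣ α.im := Int.gcd_dvd_right _ _
  refine Int.ofNat_dvd.mp (Int.dvd_coe_gcd ?_ ?_)
  · rw [re_mul]
    exact dvd_add (dvd_mul_of_dvd_left hre _) (dvd_mul_of_dvd_left (dvd_mul_of_dvd_right him _) _)
  · rw [im_mul]
    exact dvd_add (dvd_mul_of_dvd_left hre _) (dvd_mul_of_dvd_left him _)

theorem gcd_re_im_mul_of_isUnit (α : ℤ√d) {u : ℤ√d} (hu : IsUnit u) :
    Int.gcd (α * u).re (α * u).im = Int.gcd α.re α.im := by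
  obtain ⟨u, rfl⟩ := hu
  refine Nat.dvd_antisymm ?_ (gcd_re_im_dvd_gcd_re_im_mul α u)
  simpa [mul_assoc] using gcd_re_im_dvd_gcd_re_im_mul (α * (u : ℤ√d)) (↑u⁻¹ : ℤ√d)

theorem norm_mul_of_isUnit (hd : d ≤ 0) (α : ℤ√d) {u : ℤ√d} (hu : IsUnit u) :
    (α * u).norm = α.norm := by
  rw [norm_mul, (norm_eq_one_iff' hd u).mpr hu, mul_one]

end Zsqrtd

theorem denomHeight_mul_of_isUnit (α : GaussianInt) {u : GaussianInt} (hu : IsUnit u) :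
    denomHeight (α * u) = denomHeight α := by
  rw [denomHeight, denomHeight, Zsqrtd.norm_mul_of_isUnit (by norm_num) α hu,
    Zsqrtd.gcd_re_im_mul_of_isUnit α hu]

theorem denomHeight_intCast (m : ℤ) : denomHeight m = |m| := by
  rcases eq_or_ne m 0 with rfl | hm
  · rfl
  rw [denomHeight, Zsqrtd.norm_intCast, Zsqrtd.re_intCast, Zsqrtd.im_intCast, Int.gcd_zero_right,
    Int.natCast_natAbs, ← abs_mul_abs_self, Int.mul_ediv_cancel _ (abs_ne_zero.mpr hm)]

theorem denomHeight_intCast_mul_one_add_I (m : ℤ) :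
    denomHeight (m * ⟨1, 1⟩) = 2 * |m| := by
  rcases eq_or_ne m 0 with rfl | hm
  · rfl
  have hre : ((m : GaussianInt) * ⟨1, 1⟩).re = m := by simp
  have him : ((m : GaussianInt) * ⟨1, 1⟩).im = m := by simp
  rw [denomHeight, Zsqrtd.norm_mul, Zsqrtd.norm_intCast, hre, him, Int.gcd_self, Int.natCast_natAbs,
    ← abs_mul_abs_self, show Zsqrtd.norm (⟨1, 1⟩ : GaussianInt) = 2 from rfl, mul_comm, ← mul_assoc,
    Int.mul_ediv_cancel _ (abs_ne_zero.mpr hm)]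

namespace GaussianInt

theorem isUnit_I : IsUnit (⟨0, 1⟩ : GaussianInt) := IsUnit.of_mul_eq_one ⟨0, -1⟩ (by decide)

theorem one_add_I_pow_two_mul (k : ℕ) :
    (⟨1, 1⟩ : GaussianInt) ^ (2 * k) = ((2 ^ k : ℤ) : GaussianInt) * ⟨0, 1⟩ ^ k := by
  rw [pow_mul, show (⟨1, 1⟩ : GaussianInt) ^ 2 = 2 * ⟨0, 1⟩ by decide, mul_pow]
  push_cast
  rfl

end GaussianInt

theorem denomHeight_one_add_I_pow (n : ℕ) :
    denomHeight ((⟨1, 1⟩ : GaussianInt) ^ n) = 2 ^ (n - n / 2) := by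
  obtain ⟨k, rfl | rfl⟩ := Nat.even_or_odd' n
  · rw [GaussianInt.one_add_I_pow_two_mul, denomHeight_mul_of_isUnit _ (GaussianInt.isUnit_I.pow k),
      denomHeight_intCast, abs_of_pos (by positivity)]
    congr 1
    omega
  · rw [pow_succ, GaussianInt.one_add_I_pow_two_mul, mul_right_comm,
      denomHeight_mul_of_isUnit _ (GaussianInt.isUnit_I.pow k), denomHeight_intCast_mul_one_add_I,
      abs_of_pos (by positivity), ← pow_succ']
    congr 1
    omega

theorem two_pow_sub_div_two_le (n : ℕ) : (2 : ℝ) ^ (n - n / 2) ≤ 2 * 2 ^ ((n : ℝ) / 2) := by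
  have hexp : ((n - n / 2 : ℕ) : ℝ) ≤ (n : ℝ) / 2 + 1 := by
    have : 2 * (n - n / 2) ≤ n + 2 := by omega
    have := (Nat.cast_le (α := ℝ)).mpr this
    push_cast at this
    linarith
  calc (2 : ℝ) ^ (n - n / 2) = (2 : ℝ) ^ ((n - n / 2 : ℕ) : ℝ) := (Real.rpow_natCast 2 _).symm
    _ ≤ (2 : ℝ) ^ ((n : ℝ) / 2 + 1) := Real.rpow_le_rpow_of_exponent_le one_le_two hexp
    _ = 2 * 2 ^ ((n : ℝ) / 2) := by rw [Real.rpow_add_one two_ne_zero, mul_comm]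

/-- If `γ` is an associate of `1 + i`, then for every `n ≥ 1`,
`H(γⁿ) = 2^{n − ⌊n/2⌋}`; in particular `H(γⁿ) ≤ 2·2^{n/2}`. -/
theorem stmt_12 (γ : GaussianInt) (hassoc : Associated γ (⟨1, 1⟩ : GaussianInt)) :
    ∀ n : ℕ, 0 < n →
      denomHeight (γ ^ n) = 2 ^ (n - n / 2) ∧
      ((denomHeight (γ ^ n) : ℝ)) ≤ 2 * (2 : ℝ) ^ ((n : ℝ) / 2) := by
  intro n _
  obtain ⟨u, rfl⟩ := hassoc.symm
  have hheight : denomHeight ((⟨1, 1⟩ * u) ^ n) = 2 ^ (n - n / 2) := by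
    rw [mul_pow, denomHeight_mul_of_isUnit _ (u.isUnit.pow n), denomHeight_one_add_I_pow]
  refine ⟨hheight, ?_⟩
  rw [hheight]
  exact_mod_cast two_pow_sub_div_two_le n
end

section
/- Let γ ∈ ℤ[i] be a Gaussian prime whose norm N(γ) is a rational prime p ≡ 1 (mod 4). Then for every n ∈ ℕ, writing γⁿ = Aₙ + Bₙ i with Aₙ, Bₙ ∈ ℤ, one has gcd(Aₙ, Bₙ) = 1; consequently H(γⁿ) = N(γ)^n. -/
theorem Prime.star {R : Type*} [CommMonoidWithZero R] [StarMul R] {x : R} (hx : Prime x) :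
    Prime (star x) :=
  (MulEquiv.prime_iff (starMulAut : MulAut R)).mpr hx

namespace Zsqrtd

variable {d : ℤ}

theorem norm_pow (α : ℤ√d) (n : ℕ) : (α ^ n).norm = α.norm ^ n :=
  map_pow normMonoidHom α n

theorem norm_dvd_norm {α β : ℤ√d} (h : α ∣ β) : α.norm ∣ β.norm :=
  map_dvd normMonoidHom h

theorem norm_eq_star_mul_self (α : ℤ√d) : (α.norm : ℤ√d) = star α * α := by
  rw [norm_eq_mul_conj, mul_comm]

theorem gcd_re_im_eq_one_of_forall_prime_not_dvd {α : ℤ√d}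
    (h : ∀ q : ℕ, q.Prime → ¬ (q : ℤ√d) ∣ α) : Int.gcd α.re α.im = 1 := by
  refine Nat.coprime_of_dvd fun q hq hre him => h q hq ?_
  rw [← Int.cast_natCast, intCast_dvd]
  exact ⟨Int.natCast_dvd.mpr hre, Int.natCast_dvd.mpr him⟩

theorem eq_of_natCast_dvd_pow {α : ℤ√d} {p q : ℕ} (hp : p.Prime) (hq : q.Prime)
    (hnorm : α.norm = p) {n : ℕ} (hdvd : (q : ℤ√d) ∣ α ^ n) : q = p := by
  have hqq : ((q * q : ℕ) : ℤ) ∣ (p ^ n : ℕ) := by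
    simpa [norm_pow, hnorm] using norm_dvd_norm hdvd
  have hqp : q ∣ p ^ n := (Dvd.intro _ rfl).trans (Int.natCast_dvd_natCast.mp hqq)
  exact (Nat.prime_dvd_prime_iff_eq hq hp).mp (hq.dvd_of_dvd_pow hqp)

end Zsqrtd

namespace GaussianInt

theorem not_star_dvd_self {γ : GaussianInt} {p : ℕ} (hp : p.Prime) (hp2 : p ≠ 2)
    (hnorm : γ.norm = p) : ¬ star γ ∣ γ := by
  intro h
  have hpZ : Prime (p : ℤ) := Nat.prime_iff_prime_int.mp hp
  have hodd : ∀ x : ℤ, (p : ℤ) ∣ 2 * x * (2 * x) → (p : ℤ) ∣ x := by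
    intro x hx
    rcases hpZ.dvd_or_dvd (hpZ.dvd_of_dvd_pow (n := 2) (by rwa [sq])) with h2 | hx
    · exact absurd ((Nat.prime_dvd_prime_iff_eq hp Nat.prime_two).mp (by exact_mod_cast h2)) hp2
    · exact hx
  have hre : star γ ∣ ((2 * γ.re : ℤ) : GaussianInt) := by
    convert h.add (dvd_refl (star γ)) using 1
    ext <;> simp; ring
  have him : star γ ∣ (⟨0, 2 * γ.im⟩ : GaussianInt) := by
    convert h.sub (dvd_refl (star γ)) using 1
    ext <;> simp; ring
  have hpre : (p : ℤ) ∣ γ.re := hodd _ (by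
    have := Zsqrtd.norm_dvd_norm hre
    rwa [Zsqrtd.norm_conj, hnorm, Zsqrtd.norm_intCast] at this)
  have hpim : (p : ℤ) ∣ γ.im := hodd _ (by
    convert Zsqrtd.norm_dvd_norm him using 1
    · rw [Zsqrtd.norm_conj, hnorm]
    · simp [Zsqrtd.norm_def])
  have hsq : (p : ℤ) * p ∣ p * 1 :=
    calc (p : ℤ) * p ∣ γ.re * γ.re + γ.im * γ.im :=
          dvd_add (mul_dvd_mul hpre hpre) (mul_dvd_mul hpim hpim)
      _ = p * 1 := by rw [mul_one, ← hnorm, Zsqrtd.norm_def]; ring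
  exact hpZ.not_dvd_one ((mul_dvd_mul_iff_left hpZ.ne_zero).mp hsq)

theorem not_natCast_dvd_pow {γ : GaussianInt} (hγ : Prime γ) {p : ℕ} (hp : p.Prime) (hp2 : p ≠ 2)
    (hnorm : γ.norm = p) (n : ℕ) : ¬ (p : GaussianInt) ∣ γ ^ n := by
  intro h
  have hstar : star γ ∣ γ ^ n := by
    refine (Dvd.intro γ ?_).trans h
    rw [← Zsqrtd.norm_eq_star_mul_self, hnorm, Int.cast_natCast]
  exact not_star_dvd_self hp hp2 hnorm (hγ.star.dvd_of_dvd_pow hstar)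

theorem gcd_re_im_pow_eq_one {γ : GaussianInt} (hγ : Prime γ) {p : ℕ} (hp : p.Prime)
    (hp2 : p ≠ 2) (hnorm : γ.norm = p) (n : ℕ) : Int.gcd (γ ^ n).re (γ ^ n).im = 1 :=
  Zsqrtd.gcd_re_im_eq_one_of_forall_prime_not_dvd fun _ hq hdvd =>
    not_natCast_dvd_pow hγ hp hp2 hnorm n (Zsqrtd.eq_of_natCast_dvd_pow hp hq hnorm hdvd ▸ hdvd)

end GaussianInt

theorem denomHeight_eq_norm_of_gcd_eq_one {α : GaussianInt} (h : Int.gcd α.re α.im = 1) :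
    denomHeight α = α.norm := by
  simp [denomHeight, h]

/-- Let `γ ∈ ℤ[i]` be a Gaussian prime whose norm is a rational prime `p ≡ 1 (mod 4)`.
Then for every `n ≥ 1`, the real and imaginary parts of `γⁿ` are coprime; consequently
`H(γⁿ) = N(γ)ⁿ`. -/
theorem stmt_13 (γ : GaussianInt) (hγ : Irreducible γ) (p : ℕ) (hp : Nat.Prime p)
    (h1 : p % 4 = 1) (hnorm : Zsqrtd.norm γ = (p : ℤ)) :
    ∀ n : ℕ, 0 < n →
      Int.gcd ((γ ^ n).re) ((γ ^ n).im) = 1 ∧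
      denomHeight (γ ^ n) = (Zsqrtd.norm γ) ^ n := by
  intro n _
  have hp2 : p ≠ 2 := by rintro rfl; norm_num at h1
  have hgcd := GaussianInt.gcd_re_im_pow_eq_one hγ.prime hp hp2 hnorm n
  exact ⟨hgcd, by rw [denomHeight_eq_norm_of_gcd_eq_one hgcd, Zsqrtd.norm_pow]⟩
end

section
/- Let α ∈ ℤ[i] be a Gaussian prime with N(α) a rational prime ≡ 1 (mod 4), and let γ be an associate of the conjugate of α. Then for all m, n ∈ ℕ, H(αⁿ γ^m) = H(α)^{max{m,n}}. -/
theorem IsCoprime.of_add_of_mul {R : Type*} [CommRing R] {x y : R}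
    (h : IsCoprime (x + y) (x * y)) : IsCoprime x y := by
  obtain ⟨a, b, hab⟩ := h
  exact ⟨a + b * y, a, by linear_combination hab⟩

theorem Zsqrtd.norm_pow_s14 {d : ℤ} (z : ℤ√d) (k : ℕ) : (z ^ k).norm = z.norm ^ k :=
  map_pow Zsqrtd.normMonoidHom z k

namespace GaussianInt

theorem gcd_re_im_dvd_of_dvd {z w : GaussianInt} (h : z ∣ w) :
    Int.gcd z.re z.im ∣ Int.gcd w.re w.im := by
  have hz : ((Int.gcd z.re z.im : ℤ) : GaussianInt) ∣ z :=
    (Zsqrtd.intCast_dvd _ _).mpr ⟨Int.gcd_dvd_left _ _, Int.gcd_dvd_right _ _⟩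
  obtain ⟨hre, him⟩ := (Zsqrtd.intCast_dvd _ _).mp (hz.trans h)
  exact Int.natCast_dvd_natCast.mp (Int.dvd_coe_gcd hre him)

theorem gcd_re_im_eq_of_associated {z w : GaussianInt} (h : Associated z w) :
    Int.gcd z.re z.im = Int.gcd w.re w.im :=
  Nat.dvd_antisymm (gcd_re_im_dvd_of_dvd h.dvd) (gcd_re_im_dvd_of_dvd h.symm.dvd)

theorem gcd_re_im_eq_one_of_isCoprime_star {z : GaussianInt} (h : IsCoprime z (star z)) :
    Int.gcd z.re z.im = 1 := by
  set g := Int.gcd z.re z.im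
  have hg : ((g : ℤ) : GaussianInt) ∣ z :=
    (Zsqrtd.intCast_dvd _ _).mpr ⟨Int.gcd_dvd_left _ _, Int.gcd_dvd_right _ _⟩
  have hg_star : ((g : ℤ) : GaussianInt) ∣ star z := by
    simpa only [starRingEnd_apply, star_intCast] using map_dvd (starRingEnd GaussianInt) hg
  have hunit := h.isUnit_of_dvd' hg hg_star
  rw [Zsqrtd.isUnit_iff_norm_isUnit, Zsqrtd.norm_intCast] at hunit
  exact Nat.isUnit_iff.mp (Int.ofNat_isUnit.mp (isUnit_of_mul_isUnit_left hunit))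

theorem not_dvd_re_of_norm_eq_prime {z : GaussianInt} {p : ℕ} (hp : p.Prime)
    (hz : z.norm = p) : ¬ (p : ℤ) ∣ z.re := by
  intro hre
  have hnorm : z.re ^ 2 + z.im ^ 2 = p := by rw [← hz, Zsqrtd.norm_def]; ring
  have him : (p : ℤ) ∣ z.im := by
    refine (Nat.prime_iff_prime_int.mp hp).dvd_of_dvd_pow (n := 2) ?_
    rw [show z.im ^ 2 = p - z.re ^ 2 by omega]
    exact dvd_sub dvd_rfl (dvd_pow hre two_ne_zero)
  have hsq : (p : ℤ) ^ 2 ∣ p ^ 1 := by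
    rw [pow_one]
    nth_rw 2 [← hnorm]
    exact dvd_add (pow_dvd_pow_of_dvd hre 2) (pow_dvd_pow_of_dvd him 2)
  have := (Nat.pow_dvd_pow_iff_le_right hp.one_lt).mp (by exact_mod_cast hsq)
  omega

theorem isCoprime_star_of_norm_eq_prime {z : GaussianInt} {p : ℕ} (hp : p.Prime) (hp2 : p ≠ 2)
    (hz : z.norm = p) : IsCoprime z (star z) := by
  have hp' : Prime (p : ℤ) := Nat.prime_iff_prime_int.mp hp
  have hcop : IsCoprime (2 * z.re) (p : ℤ) := by
    refine ((hp'.coprime_iff_not_dvd).mpr ?_).symm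
    intro h
    rcases hp'.dvd_mul.mp h with h2 | hre
    · exact hp2 ((Nat.prime_dvd_prime_iff_eq hp Nat.prime_two).mp (by exact_mod_cast h2))
    · exact not_dvd_re_of_norm_eq_prime hp hz hre
  refine IsCoprime.of_add_of_mul ?_
  have hadd : z + star z = ((2 * z.re : ℤ) : GaussianInt) := by ext <;> simp [two_mul]
  rw [hadd, ← Zsqrtd.norm_eq_mul_conj, hz]
  exact hcop.intCast

end GaussianInt

open GaussianInt

theorem denomHeight_eq_of_associated {z w : GaussianInt} (h : Associated z w) :
    denomHeight z = denomHeight w := by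
  rw [denomHeight, denomHeight, Zsqrtd.norm_eq_of_associated (by norm_num) h,
    gcd_re_im_eq_of_associated h]

theorem denomHeight_eq_norm {z : GaussianInt} (hz : Int.gcd z.re z.im = 1) :
    denomHeight z = z.norm := by
  rw [denomHeight, hz, Nat.cast_one, Int.ediv_one]

theorem denomHeight_intCast_mul {z : GaussianInt} (hz : Int.gcd z.re z.im = 1) {c : ℤ}
    (hc : 0 ≤ c) : denomHeight (c * z) = c * z.norm := by
  rcases hc.eq_or_lt with rfl | hc
  · simp [denomHeight]
  rw [denomHeight, Zsqrtd.norm_mul, Zsqrtd.norm_intCast, Zsqrtd.re_smul, Zsqrtd.im_smul,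
    Int.gcd_mul_left, hz, mul_one, Int.natAbs_of_nonneg hc.le, mul_assoc,
    Int.mul_ediv_cancel_left _ hc.ne']

theorem denomHeight_pow_mul_star_pow_of_le {z : GaussianInt} (h : IsCoprime z (star z))
    {m n : ℕ} (hmn : m ≤ n) : denomHeight (z ^ n * star z ^ m) = z.norm ^ n := by
  have hsplit : z ^ n * star z ^ m = ((z.norm ^ m : ℤ) : GaussianInt) * z ^ (n - m) := by
    rw [Int.cast_pow, Zsqrtd.norm_eq_mul_conj, mul_pow, ← pow_mul_pow_sub z hmn]
    ring
  rw [hsplit, denomHeight_intCast_mul (gcd_re_im_eq_one_of_isCoprime_star ?_)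
    (pow_nonneg (Zsqrtd.norm_nonneg (by norm_num) z) m), Zsqrtd.norm_pow_s14, pow_mul_pow_sub _ hmn]
  simpa only [star_pow] using h.pow

theorem denomHeight_pow_mul_star_pow {z : GaussianInt} (h : IsCoprime z (star z)) (m n : ℕ) :
    denomHeight (z ^ n * star z ^ m) = z.norm ^ max m n := by
  rcases le_total m n with hmn | hnm
  · rw [denomHeight_pow_mul_star_pow_of_le h hmn, max_eq_right hmn]
  · have h' : IsCoprime (star z) (star (star z)) := by rw [star_star]; exact h.symm
    rw [max_eq_left hnm, mul_comm]
    simpa only [star_star, Zsqrtd.norm_conj] using denomHeight_pow_mul_star_pow_of_le h' hnm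

theorem stmt_14_general (α γ : GaussianInt) (p : ℕ) (hp : Nat.Prime p)
    (h1 : p % 4 = 1) (hnorm : Zsqrtd.norm α = (p : ℤ))
    (hγ : Associated γ (⟨α.re, -α.im⟩ : GaussianInt)) :
    ∀ m n : ℕ, 0 < m → 0 < n →
      denomHeight (α ^ n * γ ^ m) = denomHeight α ^ (max m n) := by
  intro m n _ _
  have hcop : IsCoprime α (star α) := isCoprime_star_of_norm_eq_prime hp (by omega) hnorm
  rw [denomHeight_eq_of_associated ((hγ.pow_pow (n := m)).mul_left (α ^ n)),
    denomHeight_eq_norm (gcd_re_im_eq_one_of_isCoprime_star hcop)]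
  exact denomHeight_pow_mul_star_pow hcop m n

/-- Let `α ∈ ℤ[i]` be a Gaussian prime with `N(α)` a rational prime `≡ 1 (mod 4)`, and
let `γ` be an associate of the conjugate of `α`. Then for all `m, n ≥ 1`,
`H(αⁿ γᵐ) = H(α)^{max{m,n}}`. -/
theorem stmt_14 (α γ : GaussianInt) (hα : Irreducible α) (p : ℕ) (hp : Nat.Prime p)
    (h1 : p % 4 = 1) (hnorm : Zsqrtd.norm α = (p : ℤ))
    (hγ : Associated γ (⟨α.re, -α.im⟩ : GaussianInt)) :
    ∀ m n : ℕ, 0 < m → 0 < n →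
      denomHeight (α ^ n * γ ^ m) = denomHeight α ^ (max m n) :=
  stmt_14_general α γ p hp h1 hnorm hγ
end

section
/- Let α ∈ ℤ[i] and let γ ∈ ℤ[i] be a Gaussian prime with γ ∤ α. Set d = ord(α; γ) and m = ν_γ(α^d − 1). Then ord(α; γ^k) = d for all 1 ≤ k ≤ m. -/
/-- The multiplicative order of `α` modulo `γ` in `ℤ[i]`: the least positive `k` with
`α^k ≡ 1 (mod γ)`. -/
noncomputable def gOrd (α γ : GaussianInt) : ℕ := sInf {k : ℕ | 0 < k ∧ γ ∣ α ^ k - 1}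

theorem gOrd_le {α γ : GaussianInt} {n : ℕ} (hn : 0 < n) (h : γ ∣ α ^ n - 1) :
    gOrd α γ ≤ n :=
  Nat.sInf_le ⟨hn, h⟩

theorem gOrd_eq_of_dvd {α γ δ : GaussianInt} (hγδ : γ ∣ δ) (hpos : gOrd α γ ≠ 0)
    (hδ : δ ∣ α ^ gOrd α γ - 1) : gOrd α δ = gOrd α γ := by
  have hγ_pos : 0 < gOrd α γ := Nat.pos_of_ne_zero hpos
  have hδ_mem : 0 < gOrd α δ ∧ δ ∣ α ^ gOrd α δ - 1 :=
    Nat.sInf_mem (s := {k | 0 < k ∧ δ ∣ α ^ k - 1}) ⟨_, hγ_pos, hδ⟩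
  exact le_antisymm (gOrd_le hγ_pos hδ) (gOrd_le hδ_mem.1 (hγδ.trans hδ_mem.2))

theorem stmt_15_general (α γ : GaussianInt)
    (d m : ℕ) (hd : d = gOrd α γ)
    (hm : γ ^ m ∣ α ^ d - 1 ∧ ¬ γ ^ (m + 1) ∣ α ^ d - 1) :
    ∀ k : ℕ, 1 ≤ k → k ≤ m → gOrd α (γ ^ k) = d := by
  intro k hk hkm
  have hd0 : d ≠ 0 := by
    rintro rfl
    exact hm.2 (by simp)
  subst hd
  exact gOrd_eq_of_dvd (dvd_pow_self γ (by omega)) hd0 ((pow_dvd_pow γ hkm).trans hm.1)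

/-- Let `γ` be a Gaussian prime with `γ ∤ α`, `d = ord(α; γ)` and `m = ν_γ(α^d − 1)`.
Then `ord(α; γ^k) = d` for all `1 ≤ k ≤ m`. -/
theorem stmt_15 (α γ : GaussianInt) (hγ : Irreducible γ) (hnd : ¬ γ ∣ α)
    (d m : ℕ) (hd : d = gOrd α γ)
    (hm : γ ^ m ∣ α ^ d - 1 ∧ ¬ γ ^ (m + 1) ∣ α ^ d - 1) :
    ∀ k : ℕ, 1 ≤ k → k ≤ m → gOrd α (γ ^ k) = d :=
  stmt_15_general α γ d m hd hm
end

section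
/- Let α ∈ ℤ[i] and let γ ∈ ℤ[i] be a Gaussian prime with γ ∤ α that is either an associate of a rational prime ≡ 3 (mod 4) or has norm a rational prime ≡ 1 (mod 4). Set d = ord(α; γ), m = ν_γ(α^d − 1), and p = H(γ). Then for every j ∈ ℕ, ord(α; γ^{m+j}) = p^j · d and ν_γ(α^{p^j d} − 1) = m + j. -/
/-! With `x = α ^ d`, the hypotheses on `γ` say that `p = H(γ)` is an odd rational prime which
`γ` divides exactly once: `H(γ)` is the positive generator of `γ ℤ[i] ∩ ℤ`. For such a prime,
lifting the exponent gives `ν_γ(x ^ t - 1) = ν_γ(x - 1) + ν_p(t)`: the prime-to-`p` part of `t`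
does not change the valuation, and each factor `p` raises it by exactly one because
`1 + x + ⋯ + x ^ (p - 1) ≡ p (mod γ²)`. As `γ ∣ α ^ k - 1` forces `d ∣ k`, this valuation
formula determines the order of `α` modulo `γ ^ (m + j)`. -/

open Finset

section LiftingTheExponent

variable {R : Type*} [CommRing R] {π x : R} {p : ℕ}

lemma natCast_dvd_of_dvd_intCast (hπ : ¬IsUnit π) (hp : p.Prime) (hπp : π ∣ (p : R))
    {n : ℤ} (hπn : π ∣ (n : R)) : (p : ℤ) ∣ n := by
  by_contra hn
  have hcop :=
    ((Nat.prime_iff_prime_int.mp hp).coprime_iff_not_dvd.mpr hn).map (Int.castRingHom R)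
  rw [eq_intCast, eq_intCast, Int.cast_natCast] at hcop
  exact hπ (hcop.isUnit_of_dvd' hπp hπn)

lemma sq_dvd_geom_sum_sub_of_dvd_sub_one (hπp : π ∣ (p : R)) (hp : Odd p) (hx : π ∣ x - 1) :
    π ^ 2 ∣ ∑ i ∈ range p, x ^ i - p := by
  obtain ⟨z, rfl⟩ : ∃ z, x = 1 + z := ⟨x - 1, by ring⟩
  rw [add_sub_cancel_left] at hx
  obtain ⟨c, hc⟩ : 2 ∣ p - 1 := (Nat.Odd.sub_odd hp odd_one).two_dvd
  -- `∑ i < p, i = p (p - 1) / 2` is a multiple of `p`, because `p` is odd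
  have hsum : ∑ i ∈ range p, (i : R) = p * c := by
    rw [← Nat.cast_sum, sum_range_id, hc, Nat.mul_div_assoc _ (dvd_mul_right 2 c),
      Nat.mul_div_cancel_left c two_pos, Nat.cast_mul]
  have hsplit : ∑ i ∈ range p, (1 + z) ^ i - p =
      ∑ i ∈ range p, ((1 + z) ^ i - z * i - 1) + z * (p * c) := by
    simp only [sum_sub_distrib, ← hsum, mul_sum, sum_const, card_range, nsmul_eq_mul,
      mul_one]
    ring
  rw [hsplit, sq]
  refine dvd_add (dvd_sum fun i _ => ?_) (mul_dvd_mul hx (hπp.mul_right _))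
  rw [← sq]
  exact (pow_dvd_pow_of_dvd hx 2).trans (by simpa using sq_dvd_add_pow_sub_sub z 1 i)

lemma emultiplicity_geom_sum_eq_one (hπp : π ∣ (p : R)) (hπp2 : ¬π ^ 2 ∣ (p : R)) (hp : Odd p)
    (hx : π ∣ x - 1) : emultiplicity π (∑ i ∈ range p, x ^ i) = 1 := by
  have hsq := sq_dvd_geom_sum_sub_of_dvd_sub_one hπp hp hx
  rw [← Nat.cast_one, emultiplicity_eq_coe, pow_one, one_add_one_eq_two]
  refine ⟨?_, fun h => hπp2 ?_⟩
  · simpa using dvd_add ((dvd_pow_self π two_ne_zero).trans hsq) hπp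
  · simpa using dvd_sub h hsq

variable [IsDomain R]

lemma emultiplicity_pow_sub_one_of_odd (hπ : Prime π) (hπp : π ∣ (p : R))
    (hπp2 : ¬π ^ 2 ∣ (p : R)) (hp : Odd p) (hx : π ∣ x - 1) :
    emultiplicity π (x ^ p - 1) = emultiplicity π (x - 1) + 1 := by
  rw [← geom_sum_mul, emultiplicity_mul hπ, emultiplicity_geom_sum_eq_one hπp hπp2 hp hx, add_comm]

lemma emultiplicity_pow_pow_sub_one_of_odd (hπ : Prime π) (hπp : π ∣ (p : R))
    (hπp2 : ¬π ^ 2 ∣ (p : R)) (hp : Odd p) (hx : π ∣ x - 1) (j : ℕ) :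
    emultiplicity π (x ^ p ^ j - 1) = emultiplicity π (x - 1) + j := by
  induction j with
  | zero => simp
  | succ j ih =>
    have hxj : π ∣ x ^ p ^ j - 1 := hx.trans (sub_one_dvd_pow_sub_one x _)
    rw [pow_succ, pow_mul, emultiplicity_pow_sub_one_of_odd hπ hπp hπp2 hp hxj, ih, Nat.cast_succ,
      add_assoc]

lemma emultiplicity_pow_sub_one (hπ : Prime π) (hp : p.Prime) (hp_odd : Odd p)
    (hπp : π ∣ (p : R)) (hπp2 : ¬π ^ 2 ∣ (p : R)) (hx : π ∣ x - 1) {t : ℕ} (ht : t ≠ 0) :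
    emultiplicity π (x ^ t - 1) = emultiplicity π (x - 1) + t.factorization p := by
  set v := t.factorization p
  set y := x ^ p ^ v
  have hy : π ∣ y - 1 := hx.trans (sub_one_dvd_pow_sub_one x _)
  have hπy : ¬π ∣ y := fun h => hπ.not_isUnit (isUnit_of_dvd_one (by simpa using dvd_sub h hy))
  have hπs : ¬π ∣ ((t / p ^ v : ℕ) : R) := fun h =>
    Nat.not_dvd_ordCompl hp ht (Int.natCast_dvd_natCast.mp
      (natCast_dvd_of_dvd_intCast hπ.not_isUnit hp hπp (by exact_mod_cast h)))
  calc emultiplicity π (x ^ t - 1)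
      = emultiplicity π (y ^ (t / p ^ v) - 1 ^ (t / p ^ v)) := by
        rw [one_pow, ← pow_mul, Nat.ordProj_mul_ordCompl_eq_self]
    _ = emultiplicity π (x - 1) + v := by
        rw [emultiplicity_pow_sub_pow_of_prime hπ (by simpa using hy) hπy hπs,
          emultiplicity_pow_pow_sub_one_of_odd hπ hπp hπp2 hp_odd hx]

end LiftingTheExponent

lemma Irreducible.not_sq_dvd_of_associated {M : Type*} [CommMonoidWithZero M] [IsCancelMulZero M]
    {γ x : M} (hγ : Irreducible γ) (h : Associated γ x) : ¬γ ^ 2 ∣ x := by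
  rw [← h.dvd_iff_dvd_right, sq]
  intro hγγ
  exact hγ.not_isUnit (isUnit_of_dvd_one
    ((mul_dvd_mul_iff_left hγ.ne_zero).mp (by rwa [mul_one])))

lemma dvd_pow_sub_one_iff_mk_pow_eq_one {R : Type*} [CommRing R] {η x : R} {k : ℕ} :
    η ∣ x ^ k - 1 ↔ Ideal.Quotient.mk (Ideal.span {η}) x ^ k = 1 := by
  rw [← map_pow, ← map_one (Ideal.Quotient.mk _), Ideal.Quotient.eq, Ideal.mem_span_singleton]

section GaussianOrder

variable {α η : GaussianInt}

lemma gOrd_eq_orderOf : gOrd α η = orderOf (Ideal.Quotient.mk (Ideal.span {η}) α) := by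
  simp_rw [gOrd, dvd_pow_sub_one_iff_mk_pow_eq_one]
  by_cases h : ∃ k, 0 < k ∧ Ideal.Quotient.mk (Ideal.span {η}) α ^ k = 1
  · obtain ⟨hpos, hpow⟩ := Nat.sInf_mem h
    refine ((orderOf_eq_iff hpos).mpr ⟨hpow, fun k hk hk0 hpowk => ?_⟩).symm
    exact Nat.notMem_of_lt_sInf hk ⟨hk0, hpowk⟩
  · push Not at h
    rw [orderOf_eq_zero_iff'.mpr h, Nat.sInf_eq_zero]
    exact Or.inr (Set.eq_empty_of_forall_notMem fun k hk => h k hk.1 hk.2)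

lemma gOrd_dvd_iff {k : ℕ} : gOrd α η ∣ k ↔ η ∣ α ^ k - 1 := by
  rw [gOrd_eq_orderOf, orderOf_dvd_iff_pow_eq_one, dvd_pow_sub_one_iff_mk_pow_eq_one]

lemma gOrd_eq_iff {n : ℕ} : gOrd α η = n ↔ ∀ k, η ∣ α ^ k - 1 ↔ n ∣ k := by
  simp_rw [← gOrd_dvd_iff, Nat.dvd_right_iff_eq]

end GaussianOrder

namespace GaussianInt

variable {γ : GaussianInt}

-- `δ = conj γ / gcd(γ.re, γ.im)`
lemma exists_mul_eq_denomHeight (hγ : γ ≠ 0) :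
    ∃ δ : GaussianInt, γ * δ = denomHeight γ ∧ IsCoprime δ.re δ.im := by
  have hg : 0 < Int.gcd γ.re γ.im := Int.gcd_pos_iff.mpr (by
    by_contra! h; exact hγ (Zsqrtd.ext h.1 h.2))
  obtain ⟨a, b, hab, ha, hb⟩ := Int.exists_gcd_one hg
  set g := Int.gcd γ.re γ.im
  have hnorm : γ.norm = g * (g * (a * a + b * b)) := by
    rw [Zsqrtd.norm_def, ha, hb]; ring
  refine ⟨⟨a, -b⟩, ?_, (Int.isCoprime_iff_gcd_eq_one.mpr hab).neg_right⟩
  rw [denomHeight, hnorm, Int.mul_ediv_cancel_left _ (by exact_mod_cast hg.ne')]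
  ext <;> simp [ha, hb] <;> ring

lemma dvd_intCast_iff_denomHeight_dvd (hγ : γ ≠ 0) {n : ℤ} :
    γ ∣ (n : GaussianInt) ↔ denomHeight γ ∣ n := by
  obtain ⟨δ, hδ, hcop⟩ := exists_mul_eq_denomHeight hγ
  refine ⟨fun ⟨c, hc⟩ => ?_, fun h => ⟨δ * (n / denomHeight γ : ℤ), ?_⟩⟩
  · have hnδ : (n : GaussianInt) * δ = (denomHeight γ : GaussianInt) * c := by
      rw [hc, ← hδ]; ring
    obtain ⟨u, v, huv⟩ := hcop
    have hre := congrArg Zsqrtd.re hnδ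
    have him := congrArg Zsqrtd.im hnδ
    simp only [Zsqrtd.re_mul, Zsqrtd.im_mul, Zsqrtd.re_intCast, Zsqrtd.im_intCast, mul_zero,
      zero_mul, add_zero] at hre him
    exact ⟨u * c.re + v * c.im, by linear_combination (-n) * huv + u * hre + v * him⟩
  · rw [← mul_assoc, hδ, ← Int.cast_mul, Int.mul_ediv_cancel' h]

lemma denomHeight_nonneg (γ : GaussianInt) : 0 ≤ denomHeight γ :=
  Int.ediv_nonneg (norm_nonneg γ) (Int.natCast_nonneg _)

lemma denomHeight_eq_of_dvd_natCast (hγ : ¬IsUnit γ) {q : ℕ} (hq : q.Prime)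
    (hγq : γ ∣ (q : GaussianInt)) : denomHeight γ = q := by
  have hγ0 : γ ≠ 0 := by rintro rfl; exact hq.ne_zero (by exact_mod_cast zero_dvd_iff.mp hγq)
  have hγq' : γ ∣ ((q : ℤ) : GaussianInt) := by rwa [Int.cast_natCast]
  refine Int.dvd_antisymm (denomHeight_nonneg γ) (Int.natCast_nonneg q)
    ((dvd_intCast_iff_denomHeight_dvd hγ0).mp hγq') ?_
  exact natCast_dvd_of_dvd_intCast hγ hq hγq ((dvd_intCast_iff_denomHeight_dvd hγ0).mpr dvd_rfl)

lemma not_sq_dvd_natCast_of_norm_eq (hγ : Irreducible γ) {q : ℕ} (hq : q.Prime) (hq_odd : Odd q)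
    (hnorm : γ.norm = q) : ¬γ ^ 2 ∣ (q : GaussianInt) := by
  intro hsq
  have hconj : (q : GaussianInt) = γ * star γ := by
    rw [← Zsqrtd.norm_eq_mul_conj, hnorm, Int.cast_natCast]
  -- `γ ∣ conj γ`, so `γ` divides `γ + conj γ = 2 re γ` and `i (conj γ - γ) = 2 im γ`; then `q`
  -- divides `re γ` and `im γ`, so `q² ∣ N γ = q`
  have hγγ : γ ∣ star γ := by
    rw [hconj, sq] at hsq; exact (mul_dvd_mul_iff_left hγ.ne_zero).mp hsq
  have hre : γ ∣ ((2 * γ.re : ℤ) : GaussianInt) := by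
    convert dvd_add dvd_rfl hγγ using 1; ext <;> simp [two_mul]
  have him : γ ∣ ((2 * γ.im : ℤ) : GaussianInt) := by
    convert dvd_mul_of_dvd_right (dvd_sub hγγ dvd_rfl) (Zsqrtd.sqrtd : GaussianInt) using 1
    ext <;> simp [two_mul]
  have hq2 : ¬(q : ℤ) ∣ 2 := by
    intro h
    obtain rfl := (Nat.prime_dvd_prime_iff_eq hq Nat.prime_two).mp (by exact_mod_cast h)
    exact absurd hq_odd (by decide)
  have hqint := Nat.prime_iff_prime_int.mp hq
  have hdvd : ∀ {n : ℤ}, γ ∣ (n : GaussianInt) → (q : ℤ) ∣ n :=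
    natCast_dvd_of_dvd_intCast hγ.not_isUnit hq ⟨star γ, hconj⟩
  obtain ⟨a, ha⟩ := (hqint.dvd_or_dvd (hdvd hre)).resolve_left hq2
  obtain ⟨b, hb⟩ := (hqint.dvd_or_dvd (hdvd him)).resolve_left hq2
  have hq0 : (q : ℤ) ≠ 0 := by exact_mod_cast hq.ne_zero
  have hab : (q : ℤ) * (q * (a * a + b * b)) = q * 1 := by
    have hsum : γ.re * γ.re + γ.im * γ.im = q := by simpa [Zsqrtd.norm_def] using hnorm
    linear_combination hsum - (γ.re + q * a) * ha - (γ.im + q * b) * hb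
  exact hqint.not_isUnit (isUnit_of_dvd_one ⟨_, (mul_left_cancel₀ hq0 hab).symm⟩)

lemma prime_odd_and_exact_dvd_of_eq_denomHeight (hγ : Irreducible γ)
    (htype : (∃ q : ℕ, Nat.Prime q ∧ q % 4 = 3 ∧ Associated γ (q : GaussianInt)) ∨
      (∃ q : ℕ, Nat.Prime q ∧ q % 4 = 1 ∧ Zsqrtd.norm γ = (q : ℤ)))
    {p : ℕ} (hp : (p : ℤ) = denomHeight γ) :
    p.Prime ∧ Odd p ∧ γ ∣ (p : GaussianInt) ∧ ¬γ ^ 2 ∣ (p : GaussianInt) := by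
  rcases htype with ⟨q, hq, hq4, hassoc⟩ | ⟨q, hq, hq4, hnorm⟩
  · obtain rfl : p = q := by
      exact_mod_cast hp.trans (denomHeight_eq_of_dvd_natCast hγ.not_isUnit hq hassoc.dvd)
    exact ⟨hq, Nat.odd_iff.mpr (by omega), hassoc.dvd, hγ.not_sq_dvd_of_associated hassoc⟩
  · have hγq : γ ∣ (q : GaussianInt) :=
      ⟨star γ, by rw [← Zsqrtd.norm_eq_mul_conj, hnorm, Int.cast_natCast]⟩
    obtain rfl : p = q := by
      exact_mod_cast hp.trans (denomHeight_eq_of_dvd_natCast hγ.not_isUnit hq hγq)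
    have hodd : Odd p := Nat.odd_iff.mpr (by omega)
    exact ⟨hq, hodd, hγq, not_sq_dvd_natCast_of_norm_eq hγ hq hodd hnorm⟩

end GaussianInt

lemma gOrd_pow_eq_of_emultiplicity {α γ : GaussianInt} {d m p j : ℕ} (hp : p.Prime)
    (hmj : m + j ≠ 0) (hd : gOrd α γ = d) (hd0 : d ≠ 0)
    (hval : ∀ t ≠ 0, emultiplicity γ (α ^ (d * t) - 1) = ↑(m + t.factorization p)) :
    gOrd α (γ ^ (m + j)) = p ^ j * d := by
  have key : ∀ t, γ ^ (m + j) ∣ α ^ (d * t) - 1 ↔ p ^ j ∣ t := by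
    intro t
    rcases eq_or_ne t 0 with rfl | ht
    · simp
    rw [pow_dvd_iff_le_emultiplicity, hval t ht, Nat.cast_le, add_le_add_iff_left,
      hp.pow_dvd_iff_le_factorization ht]
  refine gOrd_eq_iff.mpr fun k => ⟨fun hk => ?_, ?_⟩
  · obtain ⟨t, rfl⟩ : d ∣ k := hd ▸ gOrd_dvd_iff.mpr ((dvd_pow_self γ hmj).trans hk)
    rw [mul_comm (p ^ j), Nat.mul_dvd_mul_iff_left (Nat.pos_of_ne_zero hd0)]
    exact (key t).mp hk
  · rintro ⟨c, rfl⟩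
    rw [mul_comm (p ^ j), mul_assoc]
    exact (key _).mpr (dvd_mul_right _ _)

theorem stmt_16_general (α γ : GaussianInt) (hγ : Irreducible γ)
    (htype : (∃ q : ℕ, Nat.Prime q ∧ q % 4 = 3 ∧ Associated γ (q : GaussianInt)) ∨
      (∃ q : ℕ, Nat.Prime q ∧ q % 4 = 1 ∧ Zsqrtd.norm γ = (q : ℤ)))
    (d m p : ℕ) (hd : d = gOrd α γ)
    (hm : γ ^ m ∣ α ^ d - 1 ∧ ¬ γ ^ (m + 1) ∣ α ^ d - 1)
    (hp : (p : ℤ) = denomHeight γ) :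
    ∀ j : ℕ, 0 < j →
      gOrd α (γ ^ (m + j)) = p ^ j * d ∧
      γ ^ (m + j) ∣ α ^ (p ^ j * d) - 1 ∧ ¬ γ ^ (m + j + 1) ∣ α ^ (p ^ j * d) - 1 := by
  intro j hj
  obtain ⟨hp, hp_odd, hγp, hγp2⟩ :=
    GaussianInt.prime_odd_and_exact_dvd_of_eq_denomHeight hγ htype hp
  have hγd : γ ∣ α ^ d - 1 := gOrd_dvd_iff.mp hd.symm.dvd
  have hd0 : d ≠ 0 := by rintro rfl; simp at hm
  have hval : ∀ t ≠ 0, emultiplicity γ (α ^ (d * t) - 1) = ↑(m + t.factorization p) := by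
    intro t ht
    rw [pow_mul, emultiplicity_pow_sub_one hγ.prime hp hp_odd hγp hγp2 hγd ht,
      emultiplicity_eq_coe.mpr hm, Nat.cast_add]
  have hexact : emultiplicity γ (α ^ (p ^ j * d) - 1) = ↑(m + j) := by
    simpa [mul_comm, hp] using hval (p ^ j) (pow_ne_zero j hp.ne_zero)
  exact ⟨gOrd_pow_eq_of_emultiplicity hp (by omega) hd.symm hd0 hval,
    emultiplicity_eq_coe.mp hexact⟩

/-- Let `γ` be a Gaussian prime with `γ ∤ α` which is either an associate of a rational
prime `≡ 3 (mod 4)` or has norm a rational prime `≡ 1 (mod 4)`. With `d = ord(α; γ)`,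
`m = ν_γ(α^d − 1)` and `p = H(γ)`, for every `j ≥ 1` one has
`ord(α; γ^{m+j}) = p^j·d` and `ν_γ(α^{p^j d} − 1) = m + j`. -/
theorem stmt_16 (α γ : GaussianInt) (hγ : Irreducible γ) (hnd : ¬ γ ∣ α)
    (htype : (∃ q : ℕ, Nat.Prime q ∧ q % 4 = 3 ∧ Associated γ (q : GaussianInt)) ∨
      (∃ q : ℕ, Nat.Prime q ∧ q % 4 = 1 ∧ Zsqrtd.norm γ = (q : ℤ)))
    (d m p : ℕ) (hd : d = gOrd α γ)
    (hm : γ ^ m ∣ α ^ d - 1 ∧ ¬ γ ^ (m + 1) ∣ α ^ d - 1)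
    (hp : (p : ℤ) = denomHeight γ) :
    ∀ j : ℕ, 0 < j →
      gOrd α (γ ^ (m + j)) = p ^ j * d ∧
      γ ^ (m + j) ∣ α ^ (p ^ j * d) - 1 ∧ ¬ γ ^ (m + j + 1) ∣ α ^ (p ^ j * d) - 1 :=
  stmt_16_general α γ hγ htype d m p hd hm hp
end
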